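/- Let G be a graph, k ≥ 1 an integer, and C ⊆ E(G). Then C is a circuit of the k-circular matroid M_k(G) if and only if Δ(G⟨C⟩) = k and G⟨C⟩ has no isolated vertices, no leaves, and every component of G⟨C⟩ contains at least two cycles. -/

import Mathlib

open scoped Classical

/-- A finite multigraph: loops and parallel edges allowed. -/
structure Multigraph where
  V : Type
  E : Type
  [fintypeV : Fintype V]
  [fintypeE : Fintype E]
  ends : E → Sym2 V

attribute [instance] Multigraph.fintypeV Multigraph.fintypeE

namespace Multigraph

variable (G : Multigraph)

/-- Vertex support of an edge set: vertices incident to some edge of `X`. -/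
noncomputable def supp (X : Finset G.E) : Finset G.V :=
  Finset.univ.filter (fun v => ∃ e ∈ X, v ∈ G.ends e)

/-- `Δ` of the subgraph induced by the edge set `X`. -/
noncomputable def delta (X : Finset G.E) : ℤ := (X.card : ℤ) - (G.supp X).card

/-- `Δ(G) = |E(G)| - |V(G)|`. -/
noncomputable def deltaG : ℤ := (Fintype.card G.E : ℤ) - (Fintype.card G.V : ℤ)

/-- Degree of `v` in the edge set `X`: loops count twice. -/
noncomputable def degIn (X : Finset G.E) (v : G.V) : ℕ :=
  ∑ e ∈ X, (if G.ends e = Sym2.mk v v then 2 else if v ∈ G.ends e then 1 else 0)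

/-- `u` and `v` are joined by an edge of `X`. -/
def adjIn (X : Finset G.E) (u v : G.V) : Prop := ∃ e ∈ X, G.ends e = Sym2.mk u v

/-- Reachability using only edges of `X`. -/
def reachIn (X : Finset G.E) : G.V → G.V → Prop :=
  Relation.ReflTransGen (G.adjIn X)

/-- The edge set `X` induces a connected subgraph. -/
def ConnSet (X : Finset G.E) : Prop :=
  X.Nonempty ∧ ∀ u ∈ G.supp X, ∀ v ∈ G.supp X, G.reachIn X u v

/-- Edges of the component of the subgraph `(V, X)` containing vertex `v`. -/
noncomputable def compEdges (X : Finset G.E) (v : G.V) : Finset G.E :=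
  X.filter (fun f => ∃ u ∈ G.ends f, G.reachIn X v u)

/-- Vertices of the component of `v` in the graph `(V, X)` (all vertices kept). -/
noncomputable def compVerts (X : Finset G.E) (v : G.V) : Finset G.V :=
  Finset.univ.filter (fun u => G.reachIn X v u)

/-- `C` is (the edge set of) a cycle: connected, every vertex of degree 2. -/
def IsCycleSet (C : Finset G.E) : Prop :=
  G.ConnSet C ∧ ∀ v ∈ G.supp C, G.degIn C v = 2

/-- `T` induces a tree. -/
def IsTreeSet (T : Finset G.E) : Prop := G.ConnSet T ∧ G.delta T = -1

/-- The component of `v` in `(V, X)` is a tree (possibly a single vertex). -/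
def IsTreeCompAt (X : Finset G.E) (v : G.V) : Prop :=
  (G.compEdges X v).card + 1 = (G.compVerts X v).card

/-- The number of tree components of the graph `(V, X)`. -/
noncomputable def treeCount (X : Finset G.E) : ℕ :=
  (((Finset.univ : Finset G.V).filter (fun v => G.IsTreeCompAt X v)).image
    (fun v => G.compVerts X v)).card

/-- The graph `G` has no isolated vertices. -/
def NoIso : Prop := ∀ v : G.V, ∃ e : G.E, v ∈ G.ends e

/-- The graph `G` has no leaves. -/
def NoLeaf : Prop := ∀ v : G.V, G.degIn Finset.univ v ≠ 1

/-- The graph `G` is connected. -/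
def GConn : Prop := Nonempty G.V ∧ ∀ u v : G.V, G.reachIn Finset.univ u v

/-- `G` is a bicycle: connected, leafless, with `Δ(G) = 1`. -/
def IsBicycle : Prop := G.GConn ∧ G.NoLeaf ∧ G.deltaG = 1

/-- One round of deleting all edges incident to a leaf. -/
noncomputable def pruneStep (X : Finset G.E) : Finset G.E :=
  X.filter (fun e => ∀ v ∈ G.ends e, G.degIn X v ≠ 1)

/-- Edge set obtained from `G` by repeatedly deleting leaves until none remain. -/
noncomputable def kernelSet : Finset G.E :=
  G.pruneStep^[Fintype.card G.E] Finset.univ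

/-- `Δ` of the component of `G` containing `v`. -/
noncomputable def compDelta (v : G.V) : ℤ :=
  ((G.compEdges Finset.univ v).card : ℤ) - ((G.compVerts Finset.univ v).card : ℤ)

/-- The core `[G]`: union of the kernels of the components `A` with `Δ(A) ≥ 1`. -/
noncomputable def coreSet : Finset G.E :=
  G.kernelSet.filter (fun e => ∀ v ∈ G.ends e, 1 ≤ G.compDelta v)

/-- `P` is the edge set of an `(x,y)`-path. -/
def IsPathSet (P : Finset G.E) (x y : G.V) : Prop :=
  G.ConnSet P ∧ x ≠ y ∧ x ∈ G.supp P ∧ y ∈ G.supp P ∧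
  G.degIn P x = 1 ∧ G.degIn P y = 1 ∧
  ∀ v ∈ G.supp P, v ≠ x → v ≠ y → G.degIn P v = 2

/-- `C` induces a bicycle subgraph: connected, leafless, `Δ = 1`. -/
def IsBicycleSet (C : Finset G.E) : Prop :=
  G.ConnSet C ∧ (∀ v ∈ G.supp C, G.degIn C v ≠ 1) ∧ G.delta C = 1

/-- Circuits of the `k`-circular matroid `M_k(G)`: minimal nonempty edge sets `C`
with `|C| = |V(G⟨C⟩)| + k`, i.e. `Δ(G⟨C⟩) = k`. -/
def IsCircuitSet (k : ℕ) (C : Finset G.E) : Prop :=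
  (C.Nonempty ∧ G.delta C = (k : ℤ)) ∧
  ∀ D ⊂ C, ¬ (D.Nonempty ∧ G.delta D = (k : ℤ))

/-- Independent sets of `M_k(G)`. -/
def Indep (k : ℕ) (I : Finset G.E) : Prop := ∀ C ⊆ I, ¬ G.IsCircuitSet k C

/-- Bases of `M_k(G)`: maximal independent sets. -/
def IsBase (k : ℕ) (B : Finset G.E) : Prop :=
  G.Indep k B ∧ ∀ B' : Finset G.E, G.Indep k B' → B ⊆ B' → B' = B

/-- The matroid `M_k(G)` is connected: at least two elements and every two
elements lie on a common circuit. -/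
def MConn (k : ℕ) : Prop :=
  2 ≤ Fintype.card G.E ∧
  ∀ a b : G.E, ∃ C : Finset G.E, G.IsCircuitSet k C ∧ a ∈ C ∧ b ∈ C

end Multigraph

/-!
Write `Δ` for `delta`. For `k ≥ 1` the empty set has `Δ = 0 < k` and deleting one edge lowers
`Δ` by at most one, so `C` is a circuit iff `Δ C = k` and every proper subset has `Δ < k`.
Deleting the edge at a leaf does not lower `Δ`, and deleting a component `A` changes `Δ` by
`-Δ A`; hence circuits are leafless and their components have `Δ ≥ 1`. A nonempty set minimal
with `Δ ≥ 0` is a cycle, so `Δ A ≥ 1` yields a cycle, and a second one avoiding an edge of the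
first. Conversely, double counting edge ends shows that a proper subset `D` of a leafless `C`
satisfies `2 Δ D + t ≤ 2 Δ C`, where `t` counts the edges of `C \ D` touching `D`; in a connected
leafless set some such edge exists, so a cycle (with `Δ = 0`) properly inside a component forces
`Δ ≥ 1` there, and applying the count to `D ∪ A` for a component `A` not contained in `D`
gives `Δ D < Δ C`.
-/

namespace Multigraph

variable {G : Multigraph}

noncomputable def incidence (G : Multigraph) (e : G.E) (v : G.V) : ℕ :=
  if G.ends e = s(v, v) then 2 else if v ∈ G.ends e then 1 else 0

theorem degIn_eq_sum_incidence (X : Finset G.E) (v : G.V) :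
    G.degIn X v = ∑ e ∈ X, G.incidence e v := rfl

theorem exists_ends_eq (e : G.E) : ∃ a b, G.ends e = s(a, b) := by
  induction G.ends e using Sym2.ind with
  | _ a b => exact ⟨a, b, rfl⟩

theorem incidence_eq {e : G.E} {a b : G.V} (h : G.ends e = s(a, b)) (v : G.V) :
    G.incidence e v = (if v = a then 1 else 0) + (if v = b then 1 else 0) := by
  unfold incidence
  rw [h]
  by_cases hva : v = a <;> by_cases hvb : v = b <;> simp [hva, hvb] <;> grind

theorem sum_incidence_eq {e : G.E} {a b : G.V} (h : G.ends e = s(a, b)) (S : Finset G.V) :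
    ∑ v ∈ S, G.incidence e v = (if a ∈ S then 1 else 0) + (if b ∈ S then 1 else 0) := by
  simp only [incidence_eq h, Finset.sum_add_distrib, Finset.sum_ite_eq']

theorem incidence_pos_iff {e : G.E} {v : G.V} : 0 < G.incidence e v ↔ v ∈ G.ends e := by
  obtain ⟨a, b, h⟩ := exists_ends_eq e
  rw [incidence_eq h, h, Sym2.mem_iff]
  split_ifs <;> simp_all

theorem mem_supp_iff {X : Finset G.E} {v : G.V} : v ∈ G.supp X ↔ ∃ e ∈ X, v ∈ G.ends e := by
  simp [supp]

theorem degIn_pos_iff {X : Finset G.E} {v : G.V} : 0 < G.degIn X v ↔ v ∈ G.supp X := by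
  simp only [degIn_eq_sum_incidence, Finset.sum_pos_iff, incidence_pos_iff, mem_supp_iff]

theorem supp_mono {X Y : Finset G.E} (h : X ⊆ Y) : G.supp X ⊆ G.supp Y := fun _ hv =>
  have ⟨e, he, hve⟩ := mem_supp_iff.1 hv
  mem_supp_iff.2 ⟨e, h he, hve⟩

theorem supp_nonempty {X : Finset G.E} (hX : X.Nonempty) : (G.supp X).Nonempty := by
  obtain ⟨e, he⟩ := hX
  obtain ⟨a, b, h⟩ := exists_ends_eq e
  exact ⟨a, mem_supp_iff.2 ⟨e, he, h ▸ Sym2.mem_mk_left a b⟩⟩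

theorem supp_union (X Y : Finset G.E) : G.supp (X ∪ Y) = G.supp X ∪ G.supp Y := by
  ext v
  simp only [mem_supp_iff, Finset.mem_union]
  grind

theorem sum_degIn_eq_two_mul_card (X : Finset G.E) : ∑ v ∈ G.supp X, G.degIn X v = 2 * X.card := by
  simp only [degIn_eq_sum_incidence]
  rw [Finset.sum_comm, Finset.card_eq_sum_ones, Finset.mul_sum]
  refine Finset.sum_congr rfl fun e he => ?_
  obtain ⟨a, b, h⟩ := exists_ends_eq e
  have ha : a ∈ G.supp X := mem_supp_iff.2 ⟨e, he, h ▸ Sym2.mem_mk_left a b⟩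
  have hb : b ∈ G.supp X := mem_supp_iff.2 ⟨e, he, h ▸ Sym2.mem_mk_right a b⟩
  simp [sum_incidence_eq h, ha, hb]

theorem delta_empty : G.delta ∅ = 0 := by
  simp [delta, supp]

theorem nonempty_of_delta_pos {X : Finset G.E} (h : 0 < G.delta X) : X.Nonempty := by
  rw [← Finset.card_pos]
  unfold delta at h
  omega

theorem delta_le_one_add_delta_erase {X : Finset G.E} {e : G.E} (he : e ∈ X) :
    G.delta X ≤ 1 + G.delta (X.erase e) := by
  have := Finset.card_le_card (supp_mono (Finset.erase_subset e X) (G := G))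
  have := Finset.card_erase_add_one he
  unfold delta
  omega

theorem delta_le_delta_erase_of_degIn_eq_one {X : Finset G.E} {e : G.E} {v : G.V} (he : e ∈ X)
    (hve : v ∈ G.ends e) (hv : G.degIn X v = 1) : G.delta X ≤ G.delta (X.erase e) := by
  have hv' : v ∉ G.supp (X.erase e) := by
    rw [← degIn_pos_iff]
    have := Finset.add_sum_erase X (G.incidence · v) he
    have := incidence_pos_iff.2 hve
    rw [degIn_eq_sum_incidence] at hv ⊢
    omega
  have hsub : G.supp (X.erase e) ⊆ (G.supp X).erase v := fun u hu =>
    Finset.mem_erase.2 ⟨fun huv => hv' (huv ▸ hu), supp_mono (Finset.erase_subset e X) hu⟩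
  have := Finset.card_le_card hsub
  have := Finset.card_erase_add_one (mem_supp_iff.2 ⟨e, he, hve⟩)
  have := Finset.card_erase_add_one he
  unfold delta
  omega

theorem delta_union {X Y : Finset G.E} (h : Disjoint (G.supp X) (G.supp Y)) :
    G.delta (X ∪ Y) = G.delta X + G.delta Y := by
  have hXY : Disjoint X Y := Finset.disjoint_left.2 fun e heX heY => by
    obtain ⟨a, b, hab⟩ := exists_ends_eq e
    have ha := hab ▸ Sym2.mem_mk_left a b
    exact Finset.disjoint_left.1 h (mem_supp_iff.2 ⟨e, heX, ha⟩) (mem_supp_iff.2 ⟨e, heY, ha⟩)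
  simp only [delta, supp_union, Finset.card_union_of_disjoint h, Finset.card_union_of_disjoint hXY]
  push_cast
  ring

theorem delta_eq_sub_add {D C : Finset G.E} (h : D ⊆ C) :
    G.delta D = G.delta C - (C \ D).card + (G.supp C \ G.supp D).card := by
  have := Finset.card_sdiff_add_card_eq_card h
  have := Finset.card_sdiff_add_card_eq_card (supp_mono h (G := G))
  unfold delta
  omega

theorem exists_subset_delta_eq {k : ℤ} (hk : 0 ≤ k) (D : Finset G.E) (h : k ≤ G.delta D) :
    ∃ D' ⊆ D, G.delta D' = k := by
  induction D using Finset.strongInduction with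
  | _ D ih =>
    rcases h.eq_or_lt with h | h
    · exact ⟨D, subset_rfl, h.symm⟩
    obtain ⟨e, he⟩ := nonempty_of_delta_pos (hk.trans_lt h)
    obtain ⟨D', hD', hD'k⟩ := ih _ (Finset.erase_ssubset he)
      (by linarith [delta_le_one_add_delta_erase he (G := G)])
    exact ⟨D', hD'.trans (Finset.erase_subset e D), hD'k⟩

theorem isCircuitSet_iff {k : ℕ} (hk : 1 ≤ k) {C : Finset G.E} :
    G.IsCircuitSet k C ↔ G.delta C = k ∧ ∀ D ⊂ C, G.delta D < k := by
  constructor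
  · rintro ⟨⟨-, hCk⟩, hmin⟩
    refine ⟨hCk, fun D hDC => not_le.1 fun hD => ?_⟩
    obtain ⟨D', hD'D, hD'k⟩ := exists_subset_delta_eq (Int.natCast_nonneg k) D hD
    exact hmin D' (hD'D.trans_ssubset hDC) ⟨nonempty_of_delta_pos (by omega), hD'k⟩
  · rintro ⟨hCk, hlt⟩
    exact ⟨⟨nonempty_of_delta_pos (by omega), hCk⟩, fun D hDC ⟨_, hDk⟩ => (hlt D hDC).ne hDk⟩

theorem two_mul_delta_add_card_touching_le {D C : Finset G.E} (hDC : D ⊆ C)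
    (hdeg : ∀ v ∈ G.supp C, 2 ≤ G.degIn C v) :
    2 * G.delta D + {e ∈ C \ D | ∃ v ∈ G.ends e, v ∈ G.supp D}.card ≤ 2 * G.delta C := by
  have hΔ := delta_eq_sub_add hDC (G := G)
  set S := G.supp C \ G.supp D
  have hS : 2 * S.card ≤ ∑ v ∈ S, G.degIn (C \ D) v := by
    rw [mul_comm, ← smul_eq_mul, ← Finset.sum_const]
    refine Finset.sum_le_sum fun v hv => ?_
    obtain ⟨hvC, hvD⟩ := Finset.mem_sdiff.1 hv
    have h0 : G.degIn D v = 0 := Nat.eq_zero_of_not_pos (mt degIn_pos_iff.1 hvD)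
    have := Finset.sum_sdiff hDC (f := (G.incidence · v))
    have := hdeg v hvC
    simp only [degIn_eq_sum_incidence] at h0 ⊢ this
    omega
  have hedge : ∀ e ∈ C \ D, ∑ v ∈ S, G.incidence e v
      + (if ∃ v ∈ G.ends e, v ∈ G.supp D then 1 else 0) ≤ 2 := fun e _ => by
    -- an end in `supp D` is an end outside `S`
    obtain ⟨a, b, h⟩ := exists_ends_eq e
    simp only [sum_incidence_eq h, h, Sym2.mem_iff, S, Finset.mem_sdiff]
    split_ifs <;> grind
  have hcount : ∑ v ∈ S, G.degIn (C \ D) v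
      + {e ∈ C \ D | ∃ v ∈ G.ends e, v ∈ G.supp D}.card ≤ 2 * (C \ D).card := by
    simp only [degIn_eq_sum_incidence]
    rw [Finset.sum_comm, Finset.card_filter, ← Finset.sum_add_distrib, mul_comm,
      ← smul_eq_mul, ← Finset.sum_const]
    exact Finset.sum_le_sum hedge
  omega

theorem delta_le_delta_of_subset {D C : Finset G.E} (hDC : D ⊆ C)
    (hdeg : ∀ v ∈ G.supp C, 2 ≤ G.degIn C v) : G.delta D ≤ G.delta C := by
  have := two_mul_delta_add_card_touching_le hDC hdeg
  omega

theorem delta_lt_delta_of_touching {D C : Finset G.E} (hDC : D ⊆ C)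
    (hdeg : ∀ v ∈ G.supp C, 2 ≤ G.degIn C v) {e : G.E} (he : e ∈ C \ D) {v : G.V}
    (hve : v ∈ G.ends e) (hvD : v ∈ G.supp D) : G.delta D < G.delta C := by
  have := two_mul_delta_add_card_touching_le hDC hdeg
  have : 0 < {e ∈ C \ D | ∃ v ∈ G.ends e, v ∈ G.supp D}.card :=
    Finset.card_pos.2 ⟨e, Finset.mem_filter.2 ⟨he, v, hve, hvD⟩⟩
  omega

theorem reachIn_symm {X : Finset G.E} {u v : G.V} (h : G.reachIn X u v) : G.reachIn X v u :=
  haveI : Std.Symm (G.adjIn X) := ⟨fun _ _ ⟨e, he, hends⟩ => ⟨e, he, hends.trans Sym2.eq_swap⟩⟩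
  Std.Symm.symm (r := Relation.ReflTransGen (G.adjIn X)) _ _ h

theorem reachIn_of_mem_ends {X : Finset G.E} {f : G.E} (hf : f ∈ X) {u w : G.V}
    (hu : u ∈ G.ends f) (hw : w ∈ G.ends f) : G.reachIn X u w := by
  obtain ⟨a, b, h⟩ := exists_ends_eq f
  have hab : G.reachIn X a b := .single ⟨f, hf, h⟩
  rw [h, Sym2.mem_iff] at hu hw
  rcases hu with rfl | rfl <;> rcases hw with rfl | rfl
  exacts [.refl, hab, reachIn_symm hab, .refl]

theorem mem_compEdges_iff {X : Finset G.E} {v : G.V} {f : G.E} :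
    f ∈ G.compEdges X v ↔ f ∈ X ∧ ∃ u ∈ G.ends f, G.reachIn X v u := by
  simp [compEdges]

theorem compEdges_subset (X : Finset G.E) (v : G.V) : G.compEdges X v ⊆ X :=
  Finset.filter_subset _ _

theorem reachIn_of_mem_supp_compEdges {X : Finset G.E} {v u : G.V}
    (h : u ∈ G.supp (G.compEdges X v)) : G.reachIn X v u := by
  obtain ⟨f, hf, hu⟩ := mem_supp_iff.1 h
  obtain ⟨hfX, w, hw, hvw⟩ := mem_compEdges_iff.1 hf
  exact hvw.trans (reachIn_of_mem_ends hfX hw hu)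

theorem mem_compEdges_of_mem_supp {X : Finset G.E} {v u : G.V} {f : G.E} (hf : f ∈ X)
    (hu : u ∈ G.ends f) (h : u ∈ G.supp (G.compEdges X v)) : f ∈ G.compEdges X v :=
  mem_compEdges_iff.2 ⟨hf, u, hu, reachIn_of_mem_supp_compEdges h⟩

theorem disjoint_supp_sdiff_compEdges (X : Finset G.E) (v : G.V) :
    Disjoint (G.supp (X \ G.compEdges X v)) (G.supp (G.compEdges X v)) := by
  refine Finset.disjoint_left.2 fun u hu huA => ?_
  obtain ⟨f, hf, hfu⟩ := mem_supp_iff.1 hu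
  obtain ⟨hfX, hfA⟩ := Finset.mem_sdiff.1 hf
  exact hfA (mem_compEdges_of_mem_supp hfX hfu huA)

theorem degIn_compEdges {X : Finset G.E} {v u : G.V} (h : u ∈ G.supp (G.compEdges X v)) :
    G.degIn (G.compEdges X v) u = G.degIn X u := by
  have h0 : ¬ 0 < G.degIn (X \ G.compEdges X v) u := fun hpos =>
    Finset.disjoint_left.1 (disjoint_supp_sdiff_compEdges X v) (degIn_pos_iff.1 hpos) h
  have := Finset.sum_sdiff (compEdges_subset X v) (f := (G.incidence · u))
  simp only [degIn_eq_sum_incidence] at h0 ⊢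
  omega

theorem reachIn_compEdges {X : Finset G.E} {v u : G.V} (h : G.reachIn X v u) :
    G.reachIn (G.compEdges X v) v u := by
  induction h with
  | refl => exact .refl
  | tail hvw hadj ih =>
    obtain ⟨f, hfX, hends⟩ := hadj
    exact ih.tail ⟨f, mem_compEdges_iff.2 ⟨hfX, _, hends ▸ Sym2.mem_mk_left _ _, hvw⟩, hends⟩

theorem connSet_compEdges {X : Finset G.E} {v : G.V} (h : v ∈ G.supp X) :
    G.ConnSet (G.compEdges X v) := by
  obtain ⟨e, he, hve⟩ := mem_supp_iff.1 h
  refine ⟨⟨e, mem_compEdges_iff.2 ⟨he, v, hve, .refl⟩⟩, fun u hu w hw => ?_⟩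
  exact (reachIn_symm (reachIn_compEdges (reachIn_of_mem_supp_compEdges hu))).trans
    (reachIn_compEdges (reachIn_of_mem_supp_compEdges hw))

theorem delta_eq_delta_sdiff_add_delta_inter {D X : Finset G.E} (hDX : D ⊆ X) (v : G.V) :
    G.delta D = G.delta (D \ G.compEdges X v) + G.delta (D ∩ G.compEdges X v) := by
  conv_lhs => rw [← Finset.sdiff_union_inter D (G.compEdges X v)]
  exact delta_union ((disjoint_supp_sdiff_compEdges X v).mono
    (supp_mono (Finset.sdiff_subset_sdiff hDX le_rfl)) (supp_mono Finset.inter_subset_right))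

theorem exists_touching_of_connSet {A D : Finset G.E} (hA : G.ConnSet A) (hDA : D ⊂ A)
    (hD : D.Nonempty) : ∃ e ∈ A \ D, ∃ v ∈ G.ends e, v ∈ G.supp D := by
  by_contra! hcross
  obtain ⟨e₀, he₀A, he₀D⟩ := Finset.exists_of_ssubset hDA
  obtain ⟨a, b, hab⟩ := exists_ends_eq e₀
  have ha : a ∈ G.ends e₀ := hab ▸ Sym2.mem_mk_left a b
  obtain ⟨d, hd⟩ := supp_nonempty hD
  have hreach := hA.2 d (supp_mono hDA.subset hd) a (mem_supp_iff.2 ⟨e₀, he₀A, ha⟩)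
  have hclosed : ∀ u, G.reachIn A d u → u ∈ G.supp D := fun u h => by
    induction h with
    | refl => exact hd
    | tail _ hadj ih =>
      obtain ⟨f, hfA, hends⟩ := hadj
      by_cases hfD : f ∈ D
      · exact mem_supp_iff.2 ⟨f, hfD, hends ▸ Sym2.mem_mk_right _ _⟩
      · exact absurd ih (hcross f (Finset.mem_sdiff.2 ⟨hfA, hfD⟩) _ (hends ▸ Sym2.mem_mk_left _ _))
  exact hcross e₀ (Finset.mem_sdiff.2 ⟨he₀A, he₀D⟩) a ha (hclosed a hreach)

theorem delta_lt_delta_of_connSet {A D : Finset G.E} (hA : G.ConnSet A)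
    (hdeg : ∀ v ∈ G.supp A, 2 ≤ G.degIn A v) (hDA : D ⊂ A) (hD : D.Nonempty) :
    G.delta D < G.delta A := by
  obtain ⟨e, he, v, hve, hvD⟩ := exists_touching_of_connSet hA hDA hD
  exact delta_lt_delta_of_touching hDA.subset hdeg he hve hvD

theorem delta_eq_zero_of_isCycleSet {Y : Finset G.E} (h : G.IsCycleSet Y) : G.delta Y = 0 := by
  have hsum := sum_degIn_eq_two_mul_card Y (G := G)
  rw [Finset.sum_congr rfl h.2, Finset.sum_const, smul_eq_mul] at hsum
  unfold delta
  omega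

theorem one_le_delta_of_two_cycles {A C₁ C₂ : Finset G.E} (hA : G.ConnSet A)
    (hdeg : ∀ v ∈ G.supp A, 2 ≤ G.degIn A v) (h₁ : C₁ ⊆ A) (h₂ : C₂ ⊆ A)
    (hc₁ : G.IsCycleSet C₁) (hc₂ : G.IsCycleSet C₂) (hne : C₁ ≠ C₂) : 1 ≤ G.delta A := by
  wlog hC₁A : C₁ ≠ A generalizing C₁ C₂
  · exact this h₂ h₁ hc₂ hc₁ hne.symm fun h => hne ((not_not.1 hC₁A).trans h.symm)
  have := delta_lt_delta_of_connSet hA hdeg (h₁.ssubset_of_ne hC₁A) hc₁.1.1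
  rw [delta_eq_zero_of_isCycleSet hc₁] at this
  omega

theorem erase_nonempty_of_one_le_delta {X : Finset G.E} (h : 1 ≤ G.delta X) (e : G.E) :
    (X.erase e).Nonempty := by
  refine Finset.Nontrivial.erase_nonempty (Finset.one_lt_card_iff_nontrivial.1 ?_)
  have := (supp_nonempty (nonempty_of_delta_pos h)).card_pos
  unfold delta at h
  omega

theorem delta_eq_zero_of_minimal {Y : Finset G.E} (hd : 0 ≤ G.delta Y)
    (hmin : ∀ Z ⊂ Y, Z.Nonempty → G.delta Z < 0) : G.delta Y = 0 := by
  by_contra hne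
  obtain ⟨e, he⟩ := nonempty_of_delta_pos (show 0 < G.delta Y by omega)
  have := hmin _ (Finset.erase_ssubset he) (erase_nonempty_of_one_le_delta (by omega) e)
  have := delta_le_one_add_delta_erase he (G := G)
  omega

theorem connSet_of_minimal {Y : Finset G.E} (hY : Y.Nonempty) (hd : 0 ≤ G.delta Y)
    (hmin : ∀ Z ⊂ Y, Z.Nonempty → G.delta Z < 0) : G.ConnSet Y := by
  obtain ⟨v, hv⟩ := supp_nonempty hY
  have hA := connSet_compEdges hv
  rcases (compEdges_subset Y v).eq_or_ssubset with hAY | hAY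
  · rwa [hAY] at hA
  have hsplit := delta_eq_delta_sdiff_add_delta_inter (subset_refl Y) v
  rw [Finset.inter_eq_right.2 (compEdges_subset Y v)] at hsplit
  obtain ⟨e, heY, heA⟩ := Finset.exists_of_ssubset hAY
  have h₁ := hmin _ (Finset.sdiff_ssubset (compEdges_subset Y v) hA.1)
    ⟨e, Finset.mem_sdiff.2 ⟨heY, heA⟩⟩
  have h₂ := hmin _ hAY hA.1
  omega

theorem two_le_degIn_of_minimal {Y : Finset G.E} (hd : 0 ≤ G.delta Y)
    (hmin : ∀ Z ⊂ Y, Z.Nonempty → G.delta Z < 0) {v : G.V} (hv : v ∈ G.supp Y) :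
    2 ≤ G.degIn Y v := by
  have hd0 := delta_eq_zero_of_minimal hd hmin
  by_contra hlt
  have hv1 : G.degIn Y v = 1 := by have := degIn_pos_iff.2 hv; omega
  obtain ⟨e, he, hve⟩ := mem_supp_iff.1 hv
  have herase := delta_le_delta_erase_of_degIn_eq_one he hve hv1
  obtain hempty | hne := (Y.erase e).eq_empty_or_nonempty
  · -- `Y = {e}` with `Δ Y = 0` is a loop at `v`, which has degree 2
    have hYe : Y = {e} := ((Finset.erase_eq_empty_iff Y e).1 hempty).resolve_left
      (Finset.ne_empty_of_mem he)
    have hsupp : G.supp Y = {v} := by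
      obtain ⟨u, hu⟩ := Finset.card_eq_one.1 (show (G.supp Y).card = 1 by
        unfold delta at hd0; rw [hYe] at hd0 ⊢; simp at hd0; omega)
      obtain rfl : v = u := by simpa [hu] using hv
      exact hu
    have := sum_degIn_eq_two_mul_card Y (G := G)
    rw [hsupp, Finset.sum_singleton, hv1, hYe, Finset.card_singleton] at this
    omega
  · have := hmin _ (Finset.erase_ssubset he) hne
    omega

theorem isCycleSet_of_minimal {Y : Finset G.E} (hY : Y.Nonempty) (hd : 0 ≤ G.delta Y)
    (hmin : ∀ Z ⊂ Y, Z.Nonempty → G.delta Z < 0) : G.IsCycleSet Y := by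
  refine ⟨connSet_of_minimal hY hd hmin, ?_⟩
  have hsum : ∑ v ∈ G.supp Y, 2 = ∑ v ∈ G.supp Y, G.degIn Y v := by
    have := delta_eq_zero_of_minimal hd hmin
    rw [sum_degIn_eq_two_mul_card, Finset.sum_const, smul_eq_mul]
    unfold delta at this
    omega
  exact fun v hv => ((Finset.sum_eq_sum_iff_of_le fun u hu =>
    two_le_degIn_of_minimal hd hmin hu).1 hsum v hv).symm

theorem exists_isCycleSet_subset {X : Finset G.E} (hX : X.Nonempty) (hd : 0 ≤ G.delta X) :
    ∃ Y ⊆ X, G.IsCycleSet Y := by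
  induction X using Finset.strongInduction with
  | _ X ih =>
    by_cases hmin : ∀ Z ⊂ X, Z.Nonempty → G.delta Z < 0
    · exact ⟨X, subset_rfl, isCycleSet_of_minimal hX hd hmin⟩
    push Not at hmin
    obtain ⟨Z, hZX, hZ, hdZ⟩ := hmin
    obtain ⟨Y, hYZ, hY⟩ := ih Z hZX hZ hdZ
    exact ⟨Y, hYZ.trans hZX.subset, hY⟩

theorem exists_two_cycles_of_one_le_delta {A : Finset G.E} (h : 1 ≤ G.delta A) :
    ∃ C₁ C₂ : Finset G.E, C₁ ⊆ A ∧ C₂ ⊆ A ∧ G.IsCycleSet C₁ ∧ G.IsCycleSet C₂ ∧ C₁ ≠ C₂ := by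
  obtain ⟨C₁, hC₁A, hC₁⟩ := exists_isCycleSet_subset (nonempty_of_delta_pos h) (by omega)
  obtain ⟨f, hf⟩ := hC₁.1.1
  obtain ⟨C₂, hC₂A, hC₂⟩ := exists_isCycleSet_subset (erase_nonempty_of_one_le_delta h f)
    (by linarith [delta_le_one_add_delta_erase (hC₁A hf) (G := G)])
  refine ⟨C₁, C₂, hC₁A, hC₂A.trans (Finset.erase_subset f A), hC₁, hC₂, fun heq => ?_⟩
  exact Finset.notMem_erase f A (hC₂A (heq ▸ hf))

theorem two_le_degIn_compEdges {X : Finset G.E} (hdeg : ∀ v ∈ G.supp X, 2 ≤ G.degIn X v)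
    {v u : G.V} (hu : u ∈ G.supp (G.compEdges X v)) : 2 ≤ G.degIn (G.compEdges X v) u := by
  rw [degIn_compEdges hu]
  exact hdeg u (supp_mono (compEdges_subset X v) hu)

theorem delta_lt_delta_of_ssubset {D C : Finset G.E} (hdeg : ∀ v ∈ G.supp C, 2 ≤ G.degIn C v)
    (hcomp : ∀ v ∈ G.supp C, 1 ≤ G.delta (G.compEdges C v)) (hDC : D ⊂ C) :
    G.delta D < G.delta C := by
  obtain ⟨e, heC, heD⟩ := Finset.exists_of_ssubset hDC
  obtain ⟨a, b, hab⟩ := exists_ends_eq e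
  have ha : a ∈ G.ends e := hab ▸ Sym2.mem_mk_left a b
  have haC : a ∈ G.supp C := mem_supp_iff.2 ⟨e, heC, ha⟩
  have hAC := compEdges_subset C a
  have hD := delta_eq_delta_sdiff_add_delta_inter hDC.subset a
  have hDA := delta_eq_delta_sdiff_add_delta_inter (Finset.union_subset hDC.subset hAC) a
  rw [Finset.union_sdiff_right, Finset.union_inter_cancel_right] at hDA
  have hDA_le := delta_le_delta_of_subset (Finset.union_subset hDC.subset hAC) hdeg
  set A := G.compEdges C a
  have hinter : G.delta (D ∩ A) < G.delta A := by
    obtain hempty | hne := (D ∩ A).eq_empty_or_nonempty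
    · rw [hempty, delta_empty]
      exact hcomp a haC
    refine delta_lt_delta_of_connSet (connSet_compEdges haC)
      (fun u hu => two_le_degIn_compEdges hdeg hu) ?_ hne
    exact (Finset.ssubset_iff_of_subset Finset.inter_subset_right).2
      ⟨e, mem_compEdges_iff.2 ⟨heC, a, ha, .refl⟩, fun h => heD (Finset.mem_inter.1 h).1⟩
  omega

theorem degIn_ne_one_of_isCircuitSet {k : ℕ} (hk : 1 ≤ k) {C : Finset G.E}
    (hC : G.IsCircuitSet k C) {v : G.V} (hv : v ∈ G.supp C) : G.degIn C v ≠ 1 := fun hv1 => by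
  obtain ⟨e, he, hve⟩ := mem_supp_iff.1 hv
  have := delta_le_delta_erase_of_degIn_eq_one he hve hv1
  have := ((isCircuitSet_iff hk).1 hC).2 _ (Finset.erase_ssubset he)
  have := hC.1.2
  omega

theorem one_le_delta_compEdges_of_isCircuitSet {k : ℕ} (hk : 1 ≤ k) {C : Finset G.E}
    (hC : G.IsCircuitSet k C) {v : G.V} (hv : v ∈ G.supp C) :
    1 ≤ G.delta (G.compEdges C v) := by
  have hsplit := delta_eq_delta_sdiff_add_delta_inter (subset_refl C) v
  rw [Finset.inter_eq_right.2 (compEdges_subset C v)] at hsplit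
  have := ((isCircuitSet_iff hk).1 hC).2 _
    (Finset.sdiff_ssubset (compEdges_subset C v) (connSet_compEdges hv).1)
  have := hC.1.2
  omega

end Multigraph

/-- Structure of circuits of `M_k(G)` for `k ≥ 1`: `C` is a circuit iff
`Δ(G⟨C⟩) = k`, `G⟨C⟩` has no leaves, and every component of `G⟨C⟩` has at
least two cycles. -/
theorem stmt_16 (G : Multigraph) (k : ℕ) (hk : 1 ≤ k) (C : Finset G.E) :
    G.IsCircuitSet k C ↔
      (G.delta C = (k : ℤ) ∧
       (∀ v ∈ G.supp C, G.degIn C v ≠ 1) ∧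
       ∀ v ∈ G.supp C, ∃ C₁ C₂ : Finset G.E,
         C₁ ⊆ G.compEdges C v ∧ C₂ ⊆ G.compEdges C v ∧
         G.IsCycleSet C₁ ∧ G.IsCycleSet C₂ ∧ C₁ ≠ C₂) := by
  open Multigraph in
  refine ⟨fun hC => ⟨hC.1.2, fun v hv => degIn_ne_one_of_isCircuitSet hk hC hv,
    fun v hv => exists_two_cycles_of_one_le_delta
      (one_le_delta_compEdges_of_isCircuitSet hk hC hv)⟩, ?_⟩
  rintro ⟨hCk, hleaf, hcycles⟩
  have hdeg : ∀ v ∈ G.supp C, 2 ≤ G.degIn C v := fun v hv => by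
    have := degIn_pos_iff.2 hv
    have := hleaf v hv
    omega
  refine (isCircuitSet_iff hk).2 ⟨hCk, fun D hDC => hCk ▸ delta_lt_delta_of_ssubset hdeg
    (fun v hv => ?_) hDC⟩
  obtain ⟨C₁, C₂, h₁, h₂, hc₁, hc₂, hne⟩ := hcycles v hv
  exact one_le_delta_of_two_cycles (connSet_compEdges hv)
    (fun u hu => two_le_degIn_compEdges hdeg hu) h₁ h₂ hc₁ hc₂ hne
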